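/- Let G be a simple graph on n vertices with maximum degree at most d, where d ≥ 1, and let (B_v) be a family of measurable events, one per vertex, in a probability space. Suppose that P(B_v) ≤ p for every vertex v, and that for every vertex set W whose pairwise G-distances are all at least 3 one has P(⋂_{v∈W} B_v) ≤ ∏_{v∈W} P(B_v). Then for every integer w ≥ 1, the probability that there exists a 3-tree W in G of size w such that B_v occurs for every v ∈ W is at most n·(4d³·p)^w. -/

import Mathlib

open MeasureTheory
open scoped ENNReal

/-- The auxiliary graph on a vertex set `W`, joining two vertices of `W` when their
distance in `G` is exactly `3`. -/
def distThreeGraph {V : Type*} (G : SimpleGraph V) (W : Finset V) :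
    SimpleGraph {x // x ∈ W} :=
  SimpleGraph.fromRel (fun a b => G.dist a.1 b.1 = 3)

/-- `W` is a *3-tree* in `G`: the pairwise distances of the vertices of `W` are all at
least `3`, and the auxiliary graph joining vertices of `W` at distance exactly `3`
is connected. -/
def IsThreeTree {V : Type*} (G : SimpleGraph V) (W : Finset V) : Prop :=
  (∀ u ∈ W, ∀ v ∈ W, u ≠ v → 3 ≤ G.edist u v) ∧ (distThreeGraph G W).Connected

open Finset

/-!
By the union bound and negative correlation it suffices to show that there are at most
`n · 4^m · (d³)^m` 3-trees of size `m + 1`. A 3-tree is a connected vertex set of the graph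
joining vertices at distance exactly 3, which has maximum degree at most `d³`. In a graph of
maximum degree `D`, a connected set of size `m + 1` with a chosen root is spanned by a rooted
tree; in first-child/next-sibling form this is a binary tree with `m` nodes, each labelled by
an index into a neighbourhood, so there are at most `catalan m · D^m ≤ 4^m · D^m` of them.
-/

namespace BinaryTree

variable {α : Type*}

@[simp]
lemma numNodes_map {β : Type*} (f : α → β) (t : BinaryTree α) :
    (t.map f).numNodes = t.numNodes := by
  induction t with
  | nil => rfl
  | node _ l r hl hr => simp [map, hl, hr]

variable [Fintype α]

def labellings : BinaryTree Unit → Finset (BinaryTree α)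
  | nil => {nil}
  | node _ l r => ((univ ×ˢ labellings l) ×ˢ labellings r).map
      ⟨fun x => node x.1.1 x.1.2 x.2, by rintro ⟨⟨_, _⟩, _⟩ ⟨⟨_, _⟩, _⟩ h; simp_all⟩

lemma card_labellings (s : BinaryTree Unit) :
    #(labellings s : Finset (BinaryTree α)) = Fintype.card α ^ s.numNodes := by
  induction s with
  | nil => rfl
  | node _ l r hl hr =>
    simp only [labellings, card_map, card_product, card_univ, hl, hr, numNodes]
    ring

lemma mem_labellings_map (t : BinaryTree α) : t ∈ labellings (t.map fun _ => ()) := by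
  induction t with
  | nil => exact mem_singleton_self _
  | node a l r hl hr => exact mem_map.2 ⟨((a, l), r), by simp [hl, hr], rfl⟩

variable (α) [DecidableEq α]

def labelledTreesOfNumNodesEq (m : ℕ) : Finset (BinaryTree α) :=
  (treesOfNumNodesEq m).biUnion labellings

variable {α}

lemma mem_labelledTreesOfNumNodesEq_numNodes (t : BinaryTree α) :
    t ∈ labelledTreesOfNumNodesEq α t.numNodes :=
  mem_biUnion.2 ⟨_, mem_treesOfNumNodesEq.2 (numNodes_map _ t), mem_labellings_map t⟩

lemma card_labelledTreesOfNumNodesEq_le (m : ℕ) :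
    #(labelledTreesOfNumNodesEq α m) ≤ catalan m * Fintype.card α ^ m := by
  rw [← treesOfNumNodesEq_card_eq_catalan]
  refine card_biUnion_le_card_mul _ _ _ fun s hs => ?_
  rw [card_labellings, mem_treesOfNumNodesEq.1 hs]

end BinaryTree

lemma catalan_le_four_pow (m : ℕ) : catalan m ≤ 4 ^ m := by
  rw [catalan_eq_centralBinom_div]
  exact (Nat.div_le_self _ _).trans (Nat.centralBinom_le_four_pow m)

section Decode

variable {V : Type*} [DecidableEq V] {D : ℕ} (e : V → Fin D → V)

/-- First-child/next-sibling reading of a labelled binary tree as a rooted tree in `V`: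
at root `v`, the node `node i l r` makes `e v i` a child of `v`, `l` describes the subtree
below that child and `r` the remaining children of `v`. -/
def decodeFinset : BinaryTree (Fin D) → V → Finset V
  | .nil, v => {v}
  | .node i l r, v => decodeFinset l (e v i) ∪ decodeFinset r v

lemma self_mem_decodeFinset : ∀ (t : BinaryTree (Fin D)) (v : V), v ∈ decodeFinset e t v
  | .nil, v => mem_singleton_self v
  | .node _ _ r, v => mem_union_right _ (self_mem_decodeFinset r v)

lemma exists_decodeFinset_eq_insert (i : Fin D) :
    ∀ (t : BinaryTree (Fin D)) (v u : V), u ∈ decodeFinset e t v →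
      ∃ t' : BinaryTree (Fin D), t'.numNodes = t.numNodes + 1 ∧
        decodeFinset e t' v = insert (e u i) (decodeFinset e t v)
  | .nil, v, u, hu => by
    obtain rfl := mem_singleton.1 hu
    exact ⟨.node i .nil .nil, rfl, by simp [decodeFinset]⟩
  | .node j l r, v, u, hu => by
    rcases mem_union.1 hu with hu | hu
    · obtain ⟨l', hl', hdec⟩ := exists_decodeFinset_eq_insert i l (e v j) u hu
      exact ⟨.node j l' r, by simp [hl']; omega, by simp [decodeFinset, hdec, insert_union]⟩
    · obtain ⟨r', hr', hdec⟩ := exists_decodeFinset_eq_insert i r v u hu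
      exact ⟨.node j l r', by simp [hr']; omega, by simp [decodeFinset, hdec, union_insert]⟩

end Decode

namespace SimpleGraph

variable {V : Type*}

section Connected

variable (H : SimpleGraph V)

lemma exists_adj_mem_sdiff_of_connected_induce [DecidableEq V] {W S : Finset V}
    (hW : (H.induce (W : Set V)).Connected) (hSW : S ⊆ W) {r x : V} (hr : r ∈ S)
    (hx : x ∈ W \ S) : ∃ u ∈ S, ∃ v ∈ W \ S, H.Adj u v := by
  obtain ⟨p⟩ := hW.preconnected ⟨r, hSW hr⟩ ⟨x, (mem_sdiff.1 hx).1⟩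
  obtain ⟨d, -, hd₁, hd₂⟩ := p.exists_boundary_dart {y | y.1 ∈ S} hr (mem_sdiff.1 hx).2
  exact ⟨d.fst, hd₁, d.snd, mem_sdiff.2 ⟨d.snd.2, hd₂⟩, d.adj⟩

lemma exists_decodeFinset_eq [DecidableEq V] {D : ℕ} (e : V → Fin D → V)
    (hcov : ∀ u v, H.Adj u v → ∃ i, e u i = v) {W : Finset V}
    (hW : (H.induce (W : Set V)).Connected) {r : V} (hr : r ∈ W) :
    ∃ t : BinaryTree (Fin D), t.numNodes + 1 = #W ∧ decodeFinset e t r = W := by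
  have grow : ∀ k, k + 1 ≤ #W → ∃ t : BinaryTree (Fin D), t.numNodes = k ∧
      decodeFinset e t r ⊆ W ∧ #(decodeFinset e t r) = k + 1 := by
    intro k
    induction k with
    | zero => exact fun _ => ⟨.nil, rfl, by simpa [decodeFinset] using hr, rfl⟩
    | succ k ih =>
      intro hk
      obtain ⟨t, rfl, hsub, hcard⟩ := ih (by omega)
      obtain ⟨x, hx⟩ : (W \ decodeFinset e t r).Nonempty := by
        rw [← card_pos, card_sdiff_of_subset hsub]; omega
      obtain ⟨u, hu, v, hv, huv⟩ :=
        H.exists_adj_mem_sdiff_of_connected_induce hW hsub (self_mem_decodeFinset e t r) hx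
      obtain ⟨i, rfl⟩ := hcov u v huv
      obtain ⟨t', ht', hdec⟩ := exists_decodeFinset_eq_insert e i t r u hu
      refine ⟨t', ht', ?_, ?_⟩
      · rw [hdec]; exact insert_subset (mem_sdiff.1 hv).1 hsub
      · rw [hdec, card_insert_of_notMem (mem_sdiff.1 hv).2, hcard]
  have hW₀ : 0 < #W := card_pos.2 ⟨r, hr⟩
  obtain ⟨t, ht, hsub, hcard⟩ := grow (#W - 1) (by omega)
  exact ⟨t, by omega, eq_of_subset_of_card_le hsub (by omega)⟩

variable [Fintype V] [DecidableRel H.Adj] {D : ℕ}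

lemma exists_neighbor_enumeration (hdeg : ∀ v, H.degree v ≤ D) :
    ∃ e : V → Fin D → V, ∀ u v, H.Adj u v → ∃ i, e u i = v := by
  refine ⟨fun u i => (H.neighborFinset u).toList.getD i u, fun u v huv => ?_⟩
  obtain ⟨j, hj, rfl⟩ := List.getElem_of_mem ((H.neighborFinset u).mem_toList.2
    ((H.mem_neighborFinset u v).2 huv))
  have hjD : j < D := hj.trans_le (by simpa using hdeg u)
  exact ⟨⟨j, hjD⟩, List.getD_eq_getElem _ _ hj⟩

open Classical in
theorem card_connected_finsets_le (hdeg : ∀ v, H.degree v ≤ D) (m : ℕ) :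
    #{W : Finset V | #W = m + 1 ∧ (H.induce (W : Set V)).Connected} ≤
      Fintype.card V * (catalan m * D ^ m) := by
  obtain ⟨e, hcov⟩ := H.exists_neighbor_enumeration hdeg
  calc #{W : Finset V | #W = m + 1 ∧ (H.induce (W : Set V)).Connected}
      ≤ #(univ.biUnion fun r =>
          (BinaryTree.labelledTreesOfNumNodesEq (Fin D) m).image (decodeFinset e · r)) := by
        refine card_le_card fun W hW => ?_
        obtain ⟨hcard, hconn⟩ := (mem_filter.1 hW).2
        obtain ⟨r, hr⟩ : W.Nonempty := card_pos.1 (by omega)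
        obtain ⟨t, ht, rfl⟩ := H.exists_decodeFinset_eq e hcov hconn hr
        obtain rfl : t.numNodes = m := by omega
        exact mem_biUnion.2 ⟨r, mem_univ r,
          mem_image.2 ⟨t, BinaryTree.mem_labelledTreesOfNumNodesEq_numNodes t, rfl⟩⟩
    _ ≤ Fintype.card V * (catalan m * D ^ m) := by
        refine card_biUnion_le_card_mul _ _ _ fun r _ => card_image_le.trans ?_
        simpa using BinaryTree.card_labelledTreesOfNumNodesEq_le (α := Fin D) m

end Connected

section Distance

variable (G : SimpleGraph V)

def distEqGraph (k : ℕ) : SimpleGraph V :=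
  SimpleGraph.fromRel fun a b => G.dist a b = k

lemma distThreeGraph_eq_induce (W : Finset V) :
    distThreeGraph G W = (G.distEqGraph 3).induce (W : Set V) := by
  ext a b
  rw [induce_adj, distThreeGraph, distEqGraph, fromRel_adj, fromRel_adj, ne_eq, ne_eq,
    Subtype.ext_iff]

variable [Fintype V] [DecidableRel G.Adj] {d : ℕ}

lemma exists_finset_walk_endpoints (hdeg : ∀ v, G.degree v ≤ d) :
    ∀ (k : ℕ) (v : V), ∃ s : Finset V, #s ≤ d ^ k ∧
      ∀ w (p : G.Walk v w), p.length = k → w ∈ s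
  | 0, v => ⟨{v}, by simp, fun w p hp => by
      rw [Walk.eq_of_length_eq_zero hp]; exact mem_singleton_self _⟩
  | k + 1, v => by
    classical
    choose s hs hmem using exists_finset_walk_endpoints hdeg k
    refine ⟨(G.neighborFinset v).biUnion s, ?_, ?_⟩
    · calc #((G.neighborFinset v).biUnion s) ≤ #(G.neighborFinset v) * d ^ k :=
            card_biUnion_le_card_mul _ _ _ fun x _ => hs x
        _ ≤ d * d ^ k := Nat.mul_le_mul_right _ (by simpa using hdeg v)
        _ = d ^ (k + 1) := (pow_succ' d k).symm
    · rintro w (_ | ⟨hadj, q⟩) hp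
      · simp at hp
      · exact mem_biUnion.2 ⟨_, (G.mem_neighborFinset _ _).2 hadj,
          hmem _ _ q (by simpa using hp)⟩

lemma degree_distEqGraph_le {k : ℕ} [DecidableRel (G.distEqGraph k).Adj] (hk : k ≠ 0)
    (hdeg : ∀ v, G.degree v ≤ d) (v : V) : (G.distEqGraph k).degree v ≤ d ^ k := by
  obtain ⟨s, hs, hmem⟩ := G.exists_finset_walk_endpoints hdeg k v
  refine (card_le_card fun w hw => ?_).trans hs
  rw [mem_neighborFinset, distEqGraph, fromRel_adj] at hw
  have hvw : G.dist v w = k := hw.2.elim id (G.dist_comm.trans ·)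
  obtain ⟨p, hp⟩ := G.exists_walk_of_dist_ne_zero (hvw ▸ hk)
  exact hmem w p (hp.trans hvw)

end Distance

end SimpleGraph

open Classical in
theorem card_isThreeTree_le {V : Type*} [Fintype V] (G : SimpleGraph V) [DecidableRel G.Adj]
    {d : ℕ} (hdeg : ∀ v, G.degree v ≤ d) (m : ℕ) :
    #{W : Finset V | #W = m + 1 ∧ IsThreeTree G W} ≤
      Fintype.card V * (4 ^ m * (d ^ 3) ^ m) := calc
  _ ≤ #{W : Finset V | #W = m + 1 ∧ ((G.distEqGraph 3).induce (W : Set V)).Connected} :=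
      card_le_card <| monotone_filter_right _ fun W _ hW =>
        ⟨hW.1, G.distThreeGraph_eq_induce W ▸ hW.2.2⟩
  _ ≤ Fintype.card V * (catalan m * (d ^ 3) ^ m) :=
      (G.distEqGraph 3).card_connected_finsets_le (G.degree_distEqGraph_le three_ne_zero hdeg) m
  _ ≤ Fintype.card V * (4 ^ m * (d ^ 3) ^ m) := by gcongr; exact catalan_le_four_pow m

theorem prob_threeTree_all_events_le_general {V : Type*} [Fintype V] (G : SimpleGraph V)
    [DecidableRel G.Adj] (n d : ℕ) (hn : Fintype.card V = n) (hd : 1 ≤ d)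
    (hdeg : ∀ v, G.degree v ≤ d)
    {Ω : Type*} [MeasurableSpace Ω] (μ : Measure Ω)
    (B : V → Set Ω)
    (p : ℝ≥0∞) (hp : ∀ v, μ (B v) ≤ p)
    (hcorr : ∀ W : Finset V, (∀ u ∈ W, ∀ v ∈ W, u ≠ v → 3 ≤ G.edist u v) →
      μ (⋂ v ∈ W, B v) ≤ ∏ v ∈ W, μ (B v))
    (w : ℕ) (hw : 1 ≤ w) :
    μ {ω | ∃ W : Finset V, W.card = w ∧ IsThreeTree G W ∧ ∀ v ∈ W, ω ∈ B v}
      ≤ (n : ℝ≥0∞) * (4 * (d : ℝ≥0∞) ^ 3 * p) ^ w := by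
  classical
  obtain ⟨m, rfl⟩ : ∃ m, w = m + 1 := ⟨w - 1, by omega⟩
  set 𝒯 : Finset (Finset V) := {W | #W = m + 1 ∧ IsThreeTree G W}
  have hcount : #𝒯 ≤ n * (4 ^ m * (d ^ 3) ^ m) := hn ▸ card_isThreeTree_le G hdeg m
  have hprob : ∀ W ∈ 𝒯, μ (⋂ v ∈ W, B v) ≤ p ^ (m + 1) := fun W hW => by
    obtain ⟨hcard, hsep, -⟩ := (mem_filter.1 hW).2
    calc μ (⋂ v ∈ W, B v) ≤ ∏ v ∈ W, μ (B v) := hcorr W hsep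
      _ ≤ ∏ _v ∈ W, p := prod_le_prod' fun v _ => hp v
      _ = p ^ (m + 1) := by rw [prod_const, hcard]
  have hone : (1 : ℝ≥0∞) ≤ 4 * (d : ℝ≥0∞) ^ 3 :=
    one_le_mul (by norm_num) (one_le_pow₀ (by exact_mod_cast hd))
  calc μ {ω | ∃ W : Finset V, #W = m + 1 ∧ IsThreeTree G W ∧ ∀ v ∈ W, ω ∈ B v}
      ≤ μ (⋃ W ∈ 𝒯, ⋂ v ∈ W, B v) := measure_mono fun ω ⟨W, hcard, hW, hωW⟩ => by
        simp only [Set.mem_iUnion, Set.mem_iInter]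
        exact ⟨W, mem_filter.2 ⟨mem_univ W, hcard, hW⟩, hωW⟩
    _ ≤ ∑ W ∈ 𝒯, μ (⋂ v ∈ W, B v) := measure_biUnion_finset_le _ _
    _ ≤ #𝒯 * p ^ (m + 1) := by simpa using sum_le_card_nsmul _ _ _ hprob
    _ ≤ n * (4 * (d : ℝ≥0∞) ^ 3) ^ m * p ^ (m + 1) := by
        gcongr
        rw [mul_pow]
        exact_mod_cast hcount
    _ ≤ n * (4 * (d : ℝ≥0∞) ^ 3) ^ (m + 1) * p ^ (m + 1) := by
        gcongr _ * ?_ * _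
        exact pow_le_pow_right₀ hone m.le_succ
    _ = n * (4 * (d : ℝ≥0∞) ^ 3 * p) ^ (m + 1) := by ring

/-- Let `G` be a simple graph on `n` vertices with maximum degree at most `d ≥ 1`,
and `(B v)` events with `P(B v) ≤ p` such that events indexed by vertices at pairwise
distance at least `3` are negatively correlated. Then for every `w ≥ 1`, the
probability that some 3-tree of size `w` has all of its events occurring is at most
`n · (4d³p)^w`. -/
theorem prob_threeTree_all_events_le {V : Type*} [Fintype V] (G : SimpleGraph V)
    [DecidableRel G.Adj] (n d : ℕ) (hn : Fintype.card V = n) (hd : 1 ≤ d)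
    (hdeg : ∀ v, G.degree v ≤ d)
    {Ω : Type*} [MeasurableSpace Ω] (μ : Measure Ω) [IsProbabilityMeasure μ]
    (B : V → Set Ω) (hB : ∀ v, MeasurableSet (B v))
    (p : ℝ≥0∞) (hp : ∀ v, μ (B v) ≤ p)
    (hcorr : ∀ W : Finset V, (∀ u ∈ W, ∀ v ∈ W, u ≠ v → 3 ≤ G.edist u v) →
      μ (⋂ v ∈ W, B v) ≤ ∏ v ∈ W, μ (B v))
    (w : ℕ) (hw : 1 ≤ w) :
    μ {ω | ∃ W : Finset V, W.card = w ∧ IsThreeTree G W ∧ ∀ v ∈ W, ω ∈ B v}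
      ≤ (n : ℝ≥0∞) * (4 * (d : ℝ≥0∞) ^ 3 * p) ^ w :=
  prob_threeTree_all_events_le_general G n d hn hd hdeg μ B p hp hcorr w hw
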